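/- Fix integers a ≤ b ≤ c with c ∈ {b+1, ..., a+b−1} and consider N_{c+1}^{a,b,c}-bootstrap percolation. Let Γ > 0 be a sufficiently large constant, set h = h(p) = c·p^{−1/2}·(log(1/p))^{1/2}, let R₁ = [h]² × [c], and L = L(p) = exp(Γ·p^{−1/2}·(log(1/p))^{3/2}). Then the conditional probability ℙ_p(I•([L]³) | I•(R₁)) → 1 as p → 0. -/

import Mathlib

open scoped Classical

/-- Vertices of the three-dimensional lattice. -/
abbrev V3 : Type := ℤ × ℤ × ℤ

/-- The anisotropic neighbourhood `N_{a,b,c} ⊂ ℤ³`: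
nonzero multiples of `e₁` up to `a`, of `e₂` up to `b`, of `e₃` up to `c`. -/
def N3 (a b c : ℕ) : Set V3 :=
  {u | (u.1 ≠ 0 ∧ |u.1| ≤ (a : ℤ) ∧ u.2.1 = 0 ∧ u.2.2 = 0) ∨
       (u.2.1 ≠ 0 ∧ |u.2.1| ≤ (b : ℤ) ∧ u.1 = 0 ∧ u.2.2 = 0) ∨
       (u.2.2 ≠ 0 ∧ |u.2.2| ≤ (c : ℤ) ∧ u.1 = 0 ∧ u.2.1 = 0)}

/-- One step of the `r`-neighbour bootstrap dynamics inside the region `dom`: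
a healthy vertex of `dom` becomes infected when it has at least `r` infected
neighbours (its neighbours being its translates by `N_{a,b,c}`). -/
def step3 (a b c r : ℕ) (dom S : Set V3) : Set V3 :=
  S ∪ {x | x ∈ dom ∧ r ≤ {u | u ∈ N3 a b c ∧ x + u ∈ S}.ncard}

/-- The closure `⟨A⟩` of `A` under the `N_r^{a,b,c}`-bootstrap process in `dom`. -/
def closure3 (a b c r : ℕ) (dom A : Set V3) : Set V3 :=
  ⋃ n, (step3 a b c r dom)^[n] (A ∩ dom)

/-- The rectangle `[x]×[y]×[z]` as a finset of `ℤ³`. -/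
noncomputable def rectF (x y z : ℕ) : Finset V3 :=
  Finset.Icc (1 : ℤ) (x : ℤ) ×ˢ (Finset.Icc (1 : ℤ) (y : ℤ) ×ˢ Finset.Icc (1 : ℤ) (z : ℤ))

/-- The rectangle `[x]×[y]×[z]` as a set. -/
def rect (x y z : ℕ) : Set V3 := ↑(rectF x y z)

/-- The event `I•(R)`: the region `R` is internally filled by the initial set `A`,
i.e. `R ⊆ ⟨A ∩ R⟩` for the process restricted to `R`. -/
def IFill (a b c r : ℕ) (R : Set V3) (A : Finset V3) : Prop :=
  R ⊆ closure3 a b c r R ↑A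

/-- The probability of the event `E` under the Bernoulli product measure with
density `p` on subsets of the finite vertex set `D`. -/
noncomputable def PP {α : Type*} [DecidableEq α] (D : Finset α) (p : ℝ)
    (E : Finset α → Prop) : ℝ :=
  ∑ A ∈ D.powerset, if E A then p ^ A.card * (1 - p) ^ (D.card - A.card) else 0

/-- Conditional probability `ℙ_p(E | F)`. -/
noncomputable def PPc {α : Type*} [DecidableEq α] (D : Finset α) (p : ℝ)
    (E F : Finset α → Prop) : ℝ :=
  PP D p (fun A => E A ∧ F A) / PP D p F

/-!
A fully infected seed `[h]² × [c]` grows one plane at a time, in four stages. A new plane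
becomes infected as soon as it contains an initially infected nucleus: every site of the plane
already sees a full segment of infected neighbours on the side of the droplet, and the nucleus
supplies the missing in-plane neighbours, after which the infection sweeps the plane row by row.

1. Upwards in `[h]²` to height `Z = ⌈p^{-(bc+2)}⌉`: the `c` sites below and one in-plane
   neighbour give `c + 1`, so one occupied site per layer suffices. A layer is empty with
   probability `(1-p)^{h²} ≤ p^{c²}`, and `Z p^{c²} = O(p)` because `c² ≥ bc + 3`.
2. Along `x` up to `L`: the `a` sites behind and `b` (resp. `c`) sites in the plane give
   `a + b ≥ c + 1` (resp. `a + c`), so one fully occupied `b × c` tile suffices. A plane contains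
   about `hZ/(bc)` disjoint tiles, each occupied with probability `p^{bc}`; the height `Z` is what
   makes this beat the union bound over the `L ≈ exp(Γ p^{-1/2} log^{3/2}(1/p))` planes.
3. Along `y` up to `L`: the same with `b` sites behind and `a × c` tiles.
4. Upwards in `[L]²` up to height `L`, as in stage 1.

The four events only involve sites outside the seed, so they are independent of `I•(R₁)`, and each
fails with probability `O(p)` for every `Γ > 0` once `p` is small.
-/

/-! ### Bootstrap closure -/

section Closure

variable {a b c r : ℕ} {dom dom' S S' A A' : Set V3}

lemma finite_N3 (a b c : ℕ) : (N3 a b c).Finite := by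
  refine (Set.finite_Icc (-(a : ℤ), -(b : ℤ), -(c : ℤ)) ((a : ℤ), (b : ℤ), (c : ℤ))).subset ?_
  rintro ⟨u₁, u₂, u₃⟩ hu
  simp only [Set.mem_Icc, Prod.le_def]
  rcases hu with ⟨-, h, h₂, h₃⟩ | ⟨-, h, h₁, h₃⟩ | ⟨-, h, h₁, h₂⟩ <;> simp only at * <;>
    rw [abs_le] at h <;> omega

lemma step3_mono (hdom : dom ⊆ dom') (hS : S ⊆ S') :
    step3 a b c r dom S ⊆ step3 a b c r dom' S' := by
  rintro x (hx | ⟨hxd, hcard⟩)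
  · exact Or.inl (hS hx)
  · exact Or.inr ⟨hdom hxd, hcard.trans <| Set.ncard_le_ncard (fun u hu => ⟨hu.1, hS hu.2⟩)
      ((finite_N3 a b c).subset fun u hu => hu.1)⟩

lemma closure3_mono (hdom : dom ⊆ dom') (hA : A ∩ dom ⊆ A' ∩ dom') :
    closure3 a b c r dom A ⊆ closure3 a b c r dom' A' := by
  refine Set.iUnion_mono fun n => ?_
  induction n with
  | zero => exact hA
  | succ n ih =>
    simp only [Function.iterate_succ_apply']
    exact step3_mono hdom ih

lemma closure3_inter_self : closure3 a b c r dom (A ∩ dom) = closure3 a b c r dom A := by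
  simp only [closure3, Set.inter_assoc, Set.inter_self]

lemma subset_closure3 : A ∩ dom ⊆ closure3 a b c r dom A :=
  Set.subset_iUnion (fun n => (step3 a b c r dom)^[n] (A ∩ dom)) 0

lemma mem_closure3_of_le_ncard {x : V3} (hx : x ∈ dom)
    (hcard : r ≤ {u | u ∈ N3 a b c ∧ x + u ∈ closure3 a b c r dom A}.ncard) :
    x ∈ closure3 a b c r dom A := by
  set U := {u | u ∈ N3 a b c ∧ x + u ∈ closure3 a b c r dom A}
  have hU : U.Finite := (finite_N3 a b c).subset fun u hu => hu.1
  have hstages : Monotone fun n => (step3 a b c r dom)^[n] (A ∩ dom) :=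
    fun m n hmn => Function.monotone_iterate_of_id_le (fun _ => Set.subset_union_left) hmn _
  -- the finitely many infected neighbours of `x` are all infected at some finite stage `n`
  obtain ⟨n, hn⟩ := hstages.directed_le.exists_mem_subset_of_finset_subset_biUnion
    (s := (hU.image (x + ·)).toFinset) fun v hv => by
      obtain ⟨u, hu, rfl⟩ := (Set.Finite.mem_toFinset _).1 hv
      exact hu.2
  refine Set.mem_iUnion.2 ⟨n + 1, ?_⟩
  rw [Function.iterate_succ_apply']
  refine Or.inr ⟨hx, hcard.trans (Set.ncard_le_ncard (fun u hu => ⟨hu.1, hn ?_⟩)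
    ((finite_N3 a b c).subset fun u hu => hu.1))⟩
  exact (Set.Finite.mem_toFinset _).2 ⟨u, hu, rfl⟩

end Closure

lemma IFill_inter_iff {a b c r : ℕ} {S A : Finset V3} :
    IFill a b c r ↑S (A ∩ S) ↔ IFill a b c r ↑S A := by
  rw [IFill, IFill, Finset.coe_inter, closure3_inter_self]

lemma IFill_of_subset {a b c r : ℕ} {R : Set V3} {A : Finset V3} (hR : R ⊆ ↑A) :
    IFill a b c r R A :=
  fun _ hv => subset_closure3 ⟨hR hv, hv⟩

def HoldsOnOneSide (Q : ℤ → Prop) (s : ℕ) : Prop :=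
  (∀ k : ℤ, 1 ≤ k → k ≤ s → Q k) ∨ ∀ k : ℤ, 1 ≤ k → k ≤ s → Q (-k)

namespace HoldsOnOneSide

variable {Q : ℤ → Prop} {s : ℕ}

lemma zero : HoldsOnOneSide Q 0 :=
  Or.inl fun _ h₁ h₂ => by omega

lemma exists_sign (h : HoldsOnOneSide Q s) :
    ∃ σ : ℤ, |σ| = 1 ∧ ∀ k : ℤ, 1 ≤ k → k ≤ s → Q (σ * k) := by
  rcases h with h | h
  · exact ⟨1, abs_one, by simpa using h⟩
  · exact ⟨-1, by simp, by simpa using h⟩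

end HoldsOnOneSide

noncomputable def axisSegments (σ₁ σ₂ σ₃ : ℤ) (s₁ s₂ s₃ : ℕ) : Finset V3 :=
  (Finset.Icc 1 (s₁ : ℤ)).image (fun k => (σ₁ * k, 0, 0)) ∪
    (Finset.Icc 1 (s₂ : ℤ)).image (fun k => (0, σ₂ * k, 0)) ∪
    (Finset.Icc 1 (s₃ : ℤ)).image (fun k => (0, 0, σ₃ * k))

lemma card_axisSegments {σ₁ σ₂ σ₃ : ℤ} (hσ₁ : σ₁ ≠ 0) (hσ₂ : σ₂ ≠ 0) (hσ₃ : σ₃ ≠ 0)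
    (s₁ s₂ s₃ : ℕ) : (axisSegments σ₁ σ₂ σ₃ s₁ s₂ s₃).card = s₁ + s₂ + s₃ := by
  have hW₁ : ∀ u ∈ (Finset.Icc 1 (s₁ : ℤ)).image (fun k => ((σ₁ * k, 0, 0) : V3)), u.1 ≠ 0 := by
    simp only [Finset.mem_image, Finset.mem_Icc]
    rintro _ ⟨k, hk, rfl⟩
    exact mul_ne_zero hσ₁ (by omega)
  have hW₂ : ∀ u ∈ (Finset.Icc 1 (s₂ : ℤ)).image (fun k => ((0, σ₂ * k, 0) : V3)),
      u.1 = 0 ∧ u.2.1 ≠ 0 := by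
    simp only [Finset.mem_image, Finset.mem_Icc]
    rintro _ ⟨k, hk, rfl⟩
    exact ⟨rfl, mul_ne_zero hσ₂ (by omega)⟩
  have hW₃ : ∀ u ∈ (Finset.Icc 1 (s₃ : ℤ)).image (fun k => ((0, 0, σ₃ * k) : V3)),
      u.1 = 0 ∧ u.2.1 = 0 := by
    simp only [Finset.mem_image]
    rintro _ ⟨k, -, rfl⟩
    exact ⟨rfl, rfl⟩
  rw [axisSegments, Finset.card_union_of_disjoint, Finset.card_union_of_disjoint,
    Finset.card_image_of_injective, Finset.card_image_of_injective,
    Finset.card_image_of_injective]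
  · simp
  · intro k k' h; simp_all
  · intro k k' h; simp_all
  · intro k k' h; simp_all
  · exact Finset.disjoint_left.2 fun u h₁ h₂ => hW₁ u h₁ (hW₂ u h₂).1
  · refine Finset.disjoint_left.2 fun u h h₃ => ?_
    rcases Finset.mem_union.1 h with h | h
    exacts [hW₁ u h (hW₃ u h₃).1, (hW₂ u h).2 (hW₃ u h₃).2]

lemma mem_closure3_of_sides {a b c r : ℕ} {dom A : Set V3} {x y z : ℤ} (hx : (x, y, z) ∈ dom)
    {s₁ s₂ s₃ : ℕ} (hs₁ : s₁ ≤ a) (hs₂ : s₂ ≤ b) (hs₃ : s₃ ≤ c) (hr : r ≤ s₁ + s₂ + s₃)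
    (h₁ : HoldsOnOneSide (fun k => (x + k, y, z) ∈ closure3 a b c r dom A) s₁)
    (h₂ : HoldsOnOneSide (fun k => (x, y + k, z) ∈ closure3 a b c r dom A) s₂)
    (h₃ : HoldsOnOneSide (fun k => (x, y, z + k) ∈ closure3 a b c r dom A) s₃) :
    (x, y, z) ∈ closure3 a b c r dom A := by
  obtain ⟨σ₁, hσ₁, h₁⟩ := h₁.exists_sign
  obtain ⟨σ₂, hσ₂, h₂⟩ := h₂.exists_sign
  obtain ⟨σ₃, hσ₃, h₃⟩ := h₃.exists_sign
  have hσ {σ : ℤ} (h : |σ| = 1) : σ ≠ 0 := abs_pos.1 (h ▸ one_pos)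
  refine mem_closure3_of_le_ncard hx (hr.trans ?_)
  rw [← card_axisSegments (hσ hσ₁) (hσ hσ₂) (hσ hσ₃), ← Set.ncard_coe_finset]
  refine Set.ncard_le_ncard (fun u hu => ?_) ((finite_N3 a b c).subset fun u hu => hu.1)
  simp only [axisSegments, Finset.coe_union, Finset.coe_image, Set.mem_union, Set.mem_image,
    Finset.mem_coe, Finset.mem_Icc] at hu
  rcases hu with (⟨k, hk, rfl⟩ | ⟨k, hk, rfl⟩) | ⟨k, hk, rfl⟩
  · refine ⟨Or.inl ⟨mul_ne_zero (hσ hσ₁) (by omega), ?_, rfl, rfl⟩, by simpa using h₁ k hk.1 hk.2⟩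
    rw [abs_mul, hσ₁, abs_of_pos (by omega)]; omega
  · refine ⟨Or.inr (Or.inl ⟨mul_ne_zero (hσ hσ₂) (by omega), ?_, rfl, rfl⟩),
      by simpa using h₂ k hk.1 hk.2⟩
    rw [abs_mul, hσ₂, abs_of_pos (by omega)]; omega
  · refine ⟨Or.inr (Or.inr ⟨mul_ne_zero (hσ hσ₃) (by omega), ?_, rfl, rfl⟩),
      by simpa using h₃ k hk.1 hk.2⟩
    rw [abs_mul, hσ₃, abs_of_pos (by omega)]; omega

/-! ### Growth of the droplet -/

lemma Icc_fill {P : ℤ → Prop} {lo hi t₀ : ℤ} {w : ℕ} (hlo : lo ≤ t₀) (hhi : t₀ + w ≤ hi + 1)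
    (hseed : ∀ t, t₀ ≤ t → t < t₀ + w → P t)
    (hgrow : ∀ t, lo ≤ t → t ≤ hi → HoldsOnOneSide (fun k => P (t + k)) w → P t) :
    ∀ t, lo ≤ t → t ≤ hi → P t := by
  suffices h : ∀ n : ℕ, ∀ t, lo ≤ t → t ≤ hi → t₀ - n ≤ t → t < t₀ + w + n → P t from
    fun t h₁ h₂ => h ((t₀ - t).natAbs + 1) t h₁ h₂ (by omega) (by omega)
  intro n
  induction n with
  | zero => exact fun t _ _ h₁ h₂ => hseed t (by omega) (by omega)
  | succ n ih =>
    intro t h₁ h₂ h₃ h₄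
    by_cases ht : t₀ - n ≤ t ∧ t < t₀ + w + n
    · exact ih t h₁ h₂ ht.1 ht.2
    refine hgrow t h₁ h₂ ?_
    rcases not_and_or.1 ht with ht | ht
    · exact Or.inl fun k hk₁ hk₂ => ih _ (by omega) (by omega) (by omega) (by omega)
    · exact Or.inr fun k hk₁ hk₂ => ih _ (by omega) (by omega) (by omega) (by omega)

lemma rect_fill {P : ℤ → ℤ → Prop} {m n u₀ v₀ : ℤ} {α β : ℕ}
    (hu₀ : 1 ≤ u₀) (hu₁ : u₀ + α ≤ m + 1) (hv₀ : 1 ≤ v₀) (hv₁ : v₀ + β ≤ n + 1)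
    (hseed : ∀ u v, u₀ ≤ u → u < u₀ + α → v₀ ≤ v → v < v₀ + β → P u v)
    (hgrow₁ : ∀ u v, 1 ≤ u → u ≤ m → 1 ≤ v → v ≤ n →
      HoldsOnOneSide (fun k => P (u + k) v) α → P u v)
    (hgrow₂ : ∀ u v, 1 ≤ u → u ≤ m → 1 ≤ v → v ≤ n →
      HoldsOnOneSide (fun k => P u (v + k)) β → P u v) :
    ∀ u v, 1 ≤ u → u ≤ m → 1 ≤ v → v ≤ n → P u v := by
  have rows : ∀ v, v₀ ≤ v → v < v₀ + β → ∀ u, 1 ≤ u → u ≤ m → P u v := fun v hv₂ hv₃ =>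
    Icc_fill (P := (P · v)) hu₀ hu₁ (fun u h₁ h₂ => hseed u v h₁ h₂ hv₂ hv₃)
      (fun u h₁ h₂ => hgrow₁ u v h₁ h₂ (by omega) (by omega))
  exact fun u v hu₂ hu₃ => Icc_fill (P := P u) hv₀ hv₁ (fun v h₁ h₂ => rows v h₁ h₂ u hu₂ hu₃)
    (fun v h₁ h₂ => hgrow₂ u v hu₂ hu₃ h₁ h₂) v

noncomputable def box (v : V3) (α β γ : ℕ) : Finset V3 :=
  Finset.Ico v.1 (v.1 + α) ×ˢ Finset.Ico v.2.1 (v.2.1 + β) ×ˢ Finset.Ico v.2.2 (v.2.2 + γ)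

section Box

variable {α β γ : ℕ}

@[simp] lemma mem_box {v w : V3} : w ∈ box v α β γ ↔ (v.1 ≤ w.1 ∧ w.1 < v.1 + α) ∧
    (v.2.1 ≤ w.2.1 ∧ w.2.1 < v.2.1 + β) ∧ (v.2.2 ≤ w.2.2 ∧ w.2.2 < v.2.2 + γ) := by
  simp [box]

lemma coe_box_subset_iff {x₀ y₀ z₀ : ℤ} {S : Set V3} : ↑(box (x₀, y₀, z₀) α β γ) ⊆ S ↔
    ∀ x y z : ℤ, x₀ ≤ x → x < x₀ + α → y₀ ≤ y → y < y₀ + β → z₀ ≤ z → z < z₀ + γ →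
      (x, y, z) ∈ S := by
  simp only [Set.subset_def, Finset.mem_coe, mem_box, Prod.forall, and_imp]

lemma card_box {v : V3} : (box v α β γ).card = α * β * γ := by
  simp [box, mul_assoc]

lemma box_subset_box {x y z x' y' z' : ℤ} {α' β' γ' : ℕ} (h₁ : x' ≤ x) (h₂ : x + α ≤ x' + α')
    (h₃ : y' ≤ y) (h₄ : y + β ≤ y' + β') (h₅ : z' ≤ z) (h₆ : z + γ ≤ z' + γ') :
    box (x, y, z) α β γ ⊆ box (x', y', z') α' β' γ' := by
  intro w hw
  simp only [mem_box] at hw ⊢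
  omega

lemma rectF_eq_box (x y z : ℕ) : rectF x y z = box (1, 1, 1) x y z := by
  ext w
  simp only [rectF, box, Finset.mem_product, Finset.mem_Icc, Finset.mem_Ico]
  omega

end Box

section Growth

variable {a b c r : ℕ} {dom A : Set V3}

lemma layer_subset_closure3 (ha : 1 ≤ a) (hb : 1 ≤ b) (hr : r ≤ c + 1) {m n : ℕ} {z : ℤ}
    (hdom : ↑(box (1, 1, z) m n 1) ⊆ dom)
    (hbelow : ↑(box (1, 1, z - c) m n c) ⊆ closure3 a b c r dom A)
    (hseed : ∃ v ∈ box (1, 1, z) m n 1, v ∈ closure3 a b c r dom A) :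
    ↑(box (1, 1, z) m n 1) ⊆ closure3 a b c r dom A := by
  obtain ⟨⟨x₀, y₀, z₀⟩, hv, hseed⟩ := hseed
  simp only [mem_box] at hv
  obtain rfl : z = z₀ := by omega
  rw [coe_box_subset_iff] at hdom hbelow ⊢
  intro x y z' hx₁ hx₂ hy₁ hy₂ hz₁ hz₂
  obtain rfl : z = z' := by omega
  have below : ∀ x y : ℤ, 1 ≤ x → x < 1 + m → 1 ≤ y → y < 1 + n →
      HoldsOnOneSide (fun k => (x, y, z + k) ∈ closure3 a b c r dom A) c :=
    fun x y h₁ h₂ h₃ h₄ => Or.inr fun k hk₁ hk₂ => by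
      simpa [← sub_eq_add_neg] using hbelow x y (z - k) h₁ h₂ h₃ h₄ (by omega) (by omega)
  refine rect_fill (P := fun x y => (x, y, z) ∈ closure3 a b c r dom A) (α := 1) (β := 1)
    (m := m) (n := n) hv.1.1 (by omega) hv.2.1.1 (by omega) (fun x y _ _ _ _ => ?_)
    (fun x y h₁ h₂ h₃ h₄ hx => ?_) (fun x y h₁ h₂ h₃ h₄ hy => ?_) x y hx₁ (by omega) hy₁
    (by omega)
  · obtain rfl : x = x₀ := by omega
    obtain rfl : y = y₀ := by omega
    exact hseed
  · exact mem_closure3_of_sides (hdom x y z h₁ (by omega) h₃ (by omega) le_rfl (by omega)) ha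
      (Nat.zero_le b) le_rfl (by omega) hx .zero (below x y h₁ (by omega) h₃ (by omega))
  · exact mem_closure3_of_sides (hdom x y z h₁ (by omega) h₃ (by omega) le_rfl (by omega))
      (Nat.zero_le a) hb le_rfl (by omega) .zero hy (below x y h₁ (by omega) h₃ (by omega))

lemma xPlane_subset_closure3 (hr₂ : r ≤ a + b) (hr₃ : r ≤ a + c) {n Z : ℕ} {x : ℤ}
    (hdom : ↑(box (x, 1, 1) 1 n Z) ⊆ dom)
    (hbehind : ↑(box (x - a, 1, 1) a n Z) ⊆ closure3 a b c r dom A)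
    {y₀ z₀ : ℤ} (hy₀ : 1 ≤ y₀ ∧ y₀ + b ≤ n + 1) (hz₀ : 1 ≤ z₀ ∧ z₀ + c ≤ Z + 1)
    (hseed : ↑(box (x, y₀, z₀) 1 b c) ⊆ closure3 a b c r dom A) :
    ↑(box (x, 1, 1) 1 n Z) ⊆ closure3 a b c r dom A := by
  rw [coe_box_subset_iff] at hdom hbehind hseed ⊢
  intro x' y z hx₁ hx₂ hy₁ hy₂ hz₁ hz₂
  obtain rfl : x = x' := by omega
  have behind : ∀ y z : ℤ, 1 ≤ y → y < 1 + n → 1 ≤ z → z < 1 + Z →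
      HoldsOnOneSide (fun k => (x + k, y, z) ∈ closure3 a b c r dom A) a :=
    fun y z h₁ h₂ h₃ h₄ => Or.inr fun k hk₁ hk₂ => by
      simpa [← sub_eq_add_neg] using hbehind (x - k) y z (by omega) (by omega) h₁ h₂ h₃ h₄
  refine rect_fill (P := fun y z => (x, y, z) ∈ closure3 a b c r dom A) (m := n) (n := Z)
    hy₀.1 hy₀.2 hz₀.1 hz₀.2 (fun y z h₁ h₂ h₃ h₄ => hseed x y z le_rfl (by omega) h₁ h₂ h₃ h₄)
    (fun y z h₁ h₂ h₃ h₄ hy => ?_) (fun y z h₁ h₂ h₃ h₄ hz => ?_) y z hy₁ (by omega) hz₁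
    (by omega)
  · exact mem_closure3_of_sides (hdom x y z le_rfl (by omega) h₁ (by omega) h₃ (by omega))
      le_rfl le_rfl (Nat.zero_le c) (by omega) (behind y z h₁ (by omega) h₃ (by omega)) hy
      .zero
  · exact mem_closure3_of_sides (hdom x y z le_rfl (by omega) h₁ (by omega) h₃ (by omega))
      le_rfl (Nat.zero_le b) le_rfl (by omega) (behind y z h₁ (by omega) h₃ (by omega))
      .zero hz

lemma yPlane_subset_closure3 (hr₁ : r ≤ a + b) (hr₃ : r ≤ b + c) {m Z : ℕ} {y : ℤ}
    (hdom : ↑(box (1, y, 1) m 1 Z) ⊆ dom)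
    (hbehind : ↑(box (1, y - b, 1) m b Z) ⊆ closure3 a b c r dom A)
    {x₀ z₀ : ℤ} (hx₀ : 1 ≤ x₀ ∧ x₀ + a ≤ m + 1) (hz₀ : 1 ≤ z₀ ∧ z₀ + c ≤ Z + 1)
    (hseed : ↑(box (x₀, y, z₀) a 1 c) ⊆ closure3 a b c r dom A) :
    ↑(box (1, y, 1) m 1 Z) ⊆ closure3 a b c r dom A := by
  rw [coe_box_subset_iff] at hdom hbehind hseed ⊢
  intro x y' z hx₁ hx₂ hy₁ hy₂ hz₁ hz₂
  obtain rfl : y = y' := by omega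
  have behind : ∀ x z : ℤ, 1 ≤ x → x < 1 + m → 1 ≤ z → z < 1 + Z →
      HoldsOnOneSide (fun k => (x, y + k, z) ∈ closure3 a b c r dom A) b :=
    fun x z h₁ h₂ h₃ h₄ => Or.inr fun k hk₁ hk₂ => by
      simpa [← sub_eq_add_neg] using hbehind x (y - k) z h₁ h₂ (by omega) (by omega) h₃ h₄
  refine rect_fill (P := fun x z => (x, y, z) ∈ closure3 a b c r dom A) (m := m) (n := Z)
    hx₀.1 hx₀.2 hz₀.1 hz₀.2 (fun x z h₁ h₂ h₃ h₄ => hseed x y z h₁ h₂ le_rfl (by omega) h₃ h₄)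
    (fun x z h₁ h₂ h₃ h₄ hx => ?_) (fun x z h₁ h₂ h₃ h₄ hz => ?_) x z hx₁ (by omega) hz₁
    (by omega)
  · exact mem_closure3_of_sides (hdom x y z h₁ (by omega) le_rfl (by omega) h₃ (by omega))
      le_rfl le_rfl (Nat.zero_le c) (by omega) hx (behind x z h₁ (by omega) h₃ (by omega))
      .zero
  · exact mem_closure3_of_sides (hdom x y z h₁ (by omega) le_rfl (by omega) h₃ (by omega))
      (Nat.zero_le a) le_rfl le_rfl (by omega) .zero
      (behind x z h₁ (by omega) h₃ (by omega)) hz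

lemma zSlab_subset_closure3 (ha : 1 ≤ a) (hb : 1 ≤ b) (hr : r ≤ c + 1) {m n z₀ z₁ : ℕ}
    (hc : c ≤ z₀) (hz : z₀ ≤ z₁) (hdom : ↑(box (1, 1, 1) m n z₁) ⊆ dom)
    (hbase : ↑(box (1, 1, 1) m n z₀) ⊆ closure3 a b c r dom A)
    (hseeds : ∀ z : ℤ, z₀ < z → z ≤ z₁ →
      ∃ v ∈ box (1, 1, z) m n 1, v ∈ closure3 a b c r dom A) :
    ↑(box (1, 1, 1) m n z₁) ⊆ closure3 a b c r dom A := by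
  induction z₁, hz using Nat.le_induction with
  | base => exact hbase
  | succ t ht ih =>
    have hlow := ih ((Finset.coe_subset.2 (box_subset_box le_rfl le_rfl le_rfl le_rfl le_rfl
      (by omega))).trans hdom) fun z h₁ h₂ => hseeds z h₁ (by omega)
    have hlayer := layer_subset_closure3 (z := t + 1) ha hb hr
      ((Finset.coe_subset.2 (box_subset_box le_rfl le_rfl le_rfl le_rfl (by omega)
        (by omega))).trans hdom)
      ((Finset.coe_subset.2 (box_subset_box le_rfl le_rfl le_rfl le_rfl (by omega)
        (by omega))).trans hlow)
      (hseeds _ (by omega) (by omega))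
    intro w hw
    by_cases hwz : w.2.2 ≤ t
    · exact hlow (by simp only [Finset.mem_coe, mem_box] at hw ⊢; omega)
    · exact hlayer (by simp only [Finset.mem_coe, mem_box] at hw ⊢; omega)

lemma xSlab_subset_closure3 (hr₂ : r ≤ a + b) (hr₃ : r ≤ a + c) {n Z x₀ x₁ : ℕ}
    (ha : a ≤ x₀) (hx : x₀ ≤ x₁) (hdom : ↑(box (1, 1, 1) x₁ n Z) ⊆ dom)
    (hbase : ↑(box (1, 1, 1) x₀ n Z) ⊆ closure3 a b c r dom A)
    (hseeds : ∀ x : ℤ, x₀ < x → x ≤ x₁ → ∃ y₀ z₀ : ℤ, (1 ≤ y₀ ∧ y₀ + b ≤ n + 1) ∧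
      (1 ≤ z₀ ∧ z₀ + c ≤ Z + 1) ∧ ↑(box (x, y₀, z₀) 1 b c) ⊆ closure3 a b c r dom A) :
    ↑(box (1, 1, 1) x₁ n Z) ⊆ closure3 a b c r dom A := by
  induction x₁, hx using Nat.le_induction with
  | base => exact hbase
  | succ t ht ih =>
    have hlow := ih ((Finset.coe_subset.2 (box_subset_box le_rfl (by omega) le_rfl le_rfl le_rfl
      le_rfl)).trans hdom) fun x h₁ h₂ => hseeds x h₁ (by omega)
    obtain ⟨y₀, z₀, hy₀, hz₀, hseed⟩ := hseeds (t + 1) (by omega) (by omega)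
    have hplane := xPlane_subset_closure3 (x := t + 1) hr₂ hr₃
      ((Finset.coe_subset.2 (box_subset_box (by omega) (by omega) le_rfl le_rfl le_rfl
        le_rfl)).trans hdom)
      ((Finset.coe_subset.2 (box_subset_box (by omega) (by omega) le_rfl le_rfl le_rfl
        le_rfl)).trans hlow) hy₀ hz₀ hseed
    intro w hw
    by_cases hwx : w.1 ≤ t
    · exact hlow (by simp only [Finset.mem_coe, mem_box] at hw ⊢; omega)
    · exact hplane (by simp only [Finset.mem_coe, mem_box] at hw ⊢; omega)

lemma ySlab_subset_closure3 (hr₁ : r ≤ a + b) (hr₃ : r ≤ b + c) {m Z y₀ y₁ : ℕ}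
    (hb : b ≤ y₀) (hy : y₀ ≤ y₁) (hdom : ↑(box (1, 1, 1) m y₁ Z) ⊆ dom)
    (hbase : ↑(box (1, 1, 1) m y₀ Z) ⊆ closure3 a b c r dom A)
    (hseeds : ∀ y : ℤ, y₀ < y → y ≤ y₁ → ∃ x₀ z₀ : ℤ, (1 ≤ x₀ ∧ x₀ + a ≤ m + 1) ∧
      (1 ≤ z₀ ∧ z₀ + c ≤ Z + 1) ∧ ↑(box (x₀, y, z₀) a 1 c) ⊆ closure3 a b c r dom A) :
    ↑(box (1, 1, 1) m y₁ Z) ⊆ closure3 a b c r dom A := by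
  induction y₁, hy using Nat.le_induction with
  | base => exact hbase
  | succ t ht ih =>
    have hlow := ih ((Finset.coe_subset.2 (box_subset_box le_rfl le_rfl le_rfl (by omega) le_rfl
      le_rfl)).trans hdom) fun y h₁ h₂ => hseeds y h₁ (by omega)
    obtain ⟨x₀, z₀, hx₀, hz₀, hseed⟩ := hseeds (t + 1) (by omega) (by omega)
    have hplane := yPlane_subset_closure3 (y := t + 1) hr₁ hr₃
      ((Finset.coe_subset.2 (box_subset_box le_rfl le_rfl (by omega) (by omega) le_rfl
        le_rfl)).trans hdom)
      ((Finset.coe_subset.2 (box_subset_box le_rfl le_rfl (by omega) (by omega) le_rfl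
        le_rfl)).trans hlow) hx₀ hz₀ hseed
    intro w hw
    by_cases hwy : w.2.1 ≤ t
    · exact hlow (by simp only [Finset.mem_coe, mem_box] at hw ⊢; omega)
    · exact hplane (by simp only [Finset.mem_coe, mem_box] at hw ⊢; omega)

end Growth

def ContainsBlockOfEach {τ ι α : Type*} (J : Finset τ) (I : τ → Finset ι) (B : τ → ι → Finset α)
    (A : Finset α) : Prop :=
  ∀ t ∈ J, ∃ i ∈ I t, B t i ⊆ A

def GrowthEvent (a b c h Z L : ℕ) (A : Finset V3) : Prop :=
  ContainsBlockOfEach (Finset.Icc ((c : ℤ) + 1) Z) (fun z => box (1, 1, z) h h 1)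
    (fun _ v => {v}) A ∧
  ContainsBlockOfEach (Finset.Icc ((h : ℤ) + 1) L)
    (fun _ => Finset.range (h / b) ×ˢ Finset.range (Z / c))
    (fun x ij => box (x, ij.1 * b + 1, ij.2 * c + 1) 1 b c) A ∧
  ContainsBlockOfEach (Finset.Icc ((h : ℤ) + 1) L)
    (fun _ => Finset.range (L / a) ×ˢ Finset.range (Z / c))
    (fun y ij => box (ij.1 * a + 1, y, ij.2 * c + 1) a 1 c) A ∧
  ContainsBlockOfEach (Finset.Icc ((Z : ℤ) + 1) L) (fun z => box (1, 1, z) L L 1)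
    (fun _ v => {v}) A

lemma tile_bounds {i d n : ℕ} (hi : i < n / d) :
    1 ≤ (i : ℤ) * d + 1 ∧ (i : ℤ) * d + 1 + d ≤ n + 1 := by
  have hd : 0 < d := Nat.pos_of_ne_zero fun h => by simp [h] at hi
  have : (i + 1) * d ≤ n := (Nat.le_div_iff_mul_le hd).1 hi
  constructor
  · have : (0 : ℤ) ≤ i * d := by positivity
    omega
  · exact_mod_cast (by linarith : i * d + 1 + d ≤ n + 1)

lemma tile_eq_of_mem {i i' d : ℕ} {y : ℤ} (h₁ : (i : ℤ) * d + 1 ≤ y)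
    (h₂ : y < (i : ℤ) * d + 1 + d) (h₁' : (i' : ℤ) * d + 1 ≤ y) (h₂' : y < (i' : ℤ) * d + 1 + d) :
    i = i' := by
  by_contra hne
  wlog h : i < i' generalizing i i'
  · exact this h₁' h₂' h₁ h₂ (Ne.symm hne) (by omega)
  have : ((i : ℤ) + 1) * d ≤ i' * d := by gcongr; exact_mod_cast h
  linarith

lemma pairwiseDisjoint_xTiles {b c : ℕ} (x : ℤ) (s : Finset (ℕ × ℕ)) :
    (s : Set (ℕ × ℕ)).PairwiseDisjoint fun ij => box (x, ij.1 * b + 1, ij.2 * c + 1) 1 b c := by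
  rintro ⟨i, j⟩ - ⟨i', j'⟩ - hne
  refine Finset.disjoint_left.2 fun w hw hw' => hne ?_
  simp only [mem_box] at hw hw'
  exact Prod.ext (tile_eq_of_mem hw.2.1.1 hw.2.1.2 hw'.2.1.1 hw'.2.1.2)
    (tile_eq_of_mem hw.2.2.1 hw.2.2.2 hw'.2.2.1 hw'.2.2.2)

lemma pairwiseDisjoint_yTiles {a c : ℕ} (y : ℤ) (s : Finset (ℕ × ℕ)) :
    (s : Set (ℕ × ℕ)).PairwiseDisjoint fun ij => box (ij.1 * a + 1, y, ij.2 * c + 1) a 1 c := by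
  rintro ⟨i, j⟩ - ⟨i', j'⟩ - hne
  refine Finset.disjoint_left.2 fun w hw hw' => hne ?_
  simp only [mem_box] at hw hw'
  exact Prod.ext (tile_eq_of_mem hw.1.1 hw.1.2 hw'.1.1 hw'.1.2)
    (tile_eq_of_mem hw.2.2.1 hw.2.2.2 hw'.2.2.1 hw'.2.2.2)

lemma IFill_of_growthEvent {a b c h Z L : ℕ} {A : Finset V3} (hab : a ≤ b) (hbc : b < c)
    (hcab : c < a + b) (hbh : b ≤ h) (hcZ : c ≤ Z) (hhL : h ≤ L) (hZL : Z ≤ L)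
    (hA : GrowthEvent a b c h Z L A) (hseed : IFill a b c (c + 1) (rect h h c) A) :
    IFill a b c (c + 1) (rect L L L) A := by
  obtain ⟨g₁, g₂, g₃, g₄⟩ := hA
  simp only [IFill, rect, rectF_eq_box] at hseed ⊢
  set D : Set V3 := ↑(box (1, 1, 1) L L L)
  have hD {m n k : ℕ} (h₁ : m ≤ L) (h₂ : n ≤ L) (h₃ : k ≤ L) : ↑(box (1, 1, 1) m n k) ⊆ D :=
    Finset.coe_subset.2 <| box_subset_box le_rfl (by omega) le_rfl (by omega) le_rfl (by omega)
  have hinit {v : V3} (h₁ : v ∈ A) (h₂ : v ∈ box (1, 1, 1) L L L) :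
      v ∈ closure3 a b c (c + 1) D ↑A :=
    subset_closure3 ⟨h₁, h₂⟩
  have s₁ : ↑(box (1, 1, 1) h h Z) ⊆ closure3 a b c (c + 1) D ↑A := by
    refine zSlab_subset_closure3 (by omega) (by omega) le_rfl le_rfl hcZ (hD hhL hhL hZL)
      (hseed.trans (closure3_mono (hD hhL hhL (hcZ.trans hZL))
        (Set.inter_subset_inter_right _ (hD hhL hhL (hcZ.trans hZL))))) fun z h₁ h₂ => ?_
    obtain ⟨v, hv, hvA⟩ := g₁ z (Finset.mem_Icc.2 ⟨by omega, h₂⟩)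
    exact ⟨v, hv, hinit (Finset.singleton_subset_iff.1 hvA) (by simp only [mem_box] at hv ⊢; omega)⟩
  have s₂ : ↑(box (1, 1, 1) L h Z) ⊆ closure3 a b c (c + 1) D ↑A := by
    refine xSlab_subset_closure3 (by omega) (by omega) (by omega) hhL (hD le_rfl hhL hZL) s₁
      fun x h₁ h₂ => ?_
    obtain ⟨⟨i, j⟩, hij, hsub⟩ := g₂ x (Finset.mem_Icc.2 ⟨by omega, h₂⟩)
    simp only [Finset.mem_product, Finset.mem_range] at hij
    have hi := tile_bounds hij.1
    have hj := tile_bounds hij.2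
    exact ⟨_, _, hi, hj, fun v hv => hinit (hsub hv)
      (by simp only [Finset.mem_coe, mem_box] at hv ⊢; omega)⟩
  have s₃ : ↑(box (1, 1, 1) L L Z) ⊆ closure3 a b c (c + 1) D ↑A := by
    refine ySlab_subset_closure3 (by omega) (by omega) hbh hhL (hD le_rfl le_rfl hZL) s₂
      fun y h₁ h₂ => ?_
    obtain ⟨⟨i, j⟩, hij, hsub⟩ := g₃ y (Finset.mem_Icc.2 ⟨by omega, h₂⟩)
    simp only [Finset.mem_product, Finset.mem_range] at hij
    have hi := tile_bounds hij.1
    have hj := tile_bounds hij.2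
    exact ⟨_, _, hi, hj, fun v hv => hinit (hsub hv)
      (by simp only [Finset.mem_coe, mem_box] at hv ⊢; omega)⟩
  refine zSlab_subset_closure3 (by omega) (by omega) le_rfl hcZ hZL (hD le_rfl le_rfl le_rfl) s₃
    fun z h₁ h₂ => ?_
  obtain ⟨v, hv, hvA⟩ := g₄ z (Finset.mem_Icc.2 ⟨by omega, h₂⟩)
  exact ⟨v, hv, hinit (Finset.singleton_subset_iff.1 hvA) (by simp only [mem_box] at hv ⊢; omega)⟩

/-! ### The Bernoulli product measure -/

section Bernoulli

variable {α : Type*} [DecidableEq α] {D S T : Finset α} {p : ℝ} {E F : Finset α → Prop}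

lemma PP_congr (h : ∀ A ⊆ D, E A ↔ F A) : PP D p E = PP D p F :=
  Finset.sum_congr rfl fun A hA => by rw [if_congr (h A (Finset.mem_powerset.1 hA)) rfl rfl]

lemma PP_insert {x : α} (hx : x ∉ D) (E : Finset α → Prop) :
    PP (insert x D) p E = p * PP D p (fun A => E (insert x A)) + (1 - p) * PP D p E := by
  rw [PP, Finset.sum_powerset_insert hx, add_comm, PP, PP, Finset.mul_sum, Finset.mul_sum]
  congr 1 <;> refine Finset.sum_congr rfl fun A hA => ?_
  · have hAD : A ⊆ D := Finset.mem_powerset.1 hA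
    have hxA : x ∉ A := fun h => hx (hAD h)
    have hcard := Finset.card_le_card hAD
    split_ifs
    · rw [Finset.card_insert_of_notMem hx, Finset.card_insert_of_notMem hxA,
        Nat.add_sub_add_right, pow_succ]
      ring
    · simp
  · have hcard := Finset.card_le_card (Finset.mem_powerset.1 hA)
    split_ifs
    · rw [Finset.card_insert_of_notMem hx, Nat.sub_add_comm hcard, pow_succ]
      ring
    · simp

lemma PP_empty (E : Finset α → Prop) : PP ∅ p E = if E ∅ then 1 else 0 := by
  simp [PP]

lemma PP_true (D : Finset α) (p : ℝ) : PP D p (fun _ => True) = 1 := by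
  induction D using Finset.induction with
  | empty => simp [PP_empty]
  | insert x D hx ih => rw [PP_insert hx, ih]; ring

lemma PP_not (E : Finset α → Prop) : PP D p (fun A => ¬ E A) = 1 - PP D p E := by
  rw [← PP_true D p, PP, PP, PP, ← Finset.sum_sub_distrib]
  refine Finset.sum_congr rfl fun A _ => ?_
  by_cases hE : E A <;> simp [hE]

lemma PP_weight_nonneg (hp₀ : 0 ≤ p) (hp₁ : p ≤ 1) (n k : ℕ) :
    0 ≤ p ^ k * (1 - p) ^ (n - k) :=
  mul_nonneg (pow_nonneg hp₀ _) (pow_nonneg (by linarith) _)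

lemma PP_mono (hp₀ : 0 ≤ p) (hp₁ : p ≤ 1) (h : ∀ A ⊆ D, E A → F A) : PP D p E ≤ PP D p F :=
  Finset.sum_le_sum fun A hA => by
    have := h A (Finset.mem_powerset.1 hA)
    split_ifs <;> simp_all [PP_weight_nonneg hp₀ hp₁]

lemma PP_or_le (hp₀ : 0 ≤ p) (hp₁ : p ≤ 1) :
    PP D p (fun A => E A ∨ F A) ≤ PP D p E + PP D p F := by
  rw [PP, PP, PP, ← Finset.sum_add_distrib]
  refine Finset.sum_le_sum fun A _ => ?_
  have := PP_weight_nonneg hp₀ hp₁ D.card A.card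
  split_ifs <;> simp_all

lemma PP_not_and_le (hp₀ : 0 ≤ p) (hp₁ : p ≤ 1) :
    PP D p (fun A => ¬ (E A ∧ F A)) ≤ PP D p (fun A => ¬ E A) + PP D p (fun A => ¬ F A) :=
  (PP_mono hp₀ hp₁ fun _ _ h => not_and_or.1 h).trans (PP_or_le hp₀ hp₁)

lemma PP_exists_le {τ : Type*} (hp₀ : 0 ≤ p) (hp₁ : p ≤ 1) (J : Finset τ)
    (E : τ → Finset α → Prop) : PP D p (fun A => ∃ t ∈ J, E t A) ≤ ∑ t ∈ J, PP D p (E t) := by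
  classical
  induction J using Finset.induction with
  | empty => simp [PP]
  | insert t J ht ih =>
    rw [Finset.sum_insert ht]
    calc PP D p (fun A => ∃ s ∈ insert t J, E s A)
        = PP D p (fun A => E t A ∨ ∃ s ∈ J, E s A) := PP_congr fun A _ => by simp
      _ ≤ _ := (PP_or_le hp₀ hp₁).trans (by linarith)

lemma PP_pos (hp₀ : 0 < p) (hp₁ : p ≤ 1) (hE : E D) : 0 < PP D p E := by
  refine lt_of_lt_of_le ?_ (Finset.single_le_sum (fun B _ => ?_) (Finset.mem_powerset_self D))
  · simp [hE, pow_pos hp₀]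
  · split_ifs <;> simp [PP_weight_nonneg hp₀.le hp₁]

lemma PP_union_mul (hST : Disjoint S T) (E F : Finset α → Prop) :
    PP (S ∪ T) p (fun A => E (A ∩ S) ∧ F (A ∩ T)) = PP S p E * PP T p F := by
  induction T using Finset.induction generalizing F with
  | empty =>
    rw [Finset.union_empty, PP_empty]
    by_cases hF : F ∅
    · simp only [hF, if_true, mul_one, Finset.inter_empty, and_true]
      exact PP_congr fun A hA => by rw [Finset.inter_eq_left.2 hA]
    · simp [hF, PP]
  | insert x T hx ih =>
    have hxS : x ∉ S := Finset.disjoint_right.1 hST (Finset.mem_insert_self x T)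
    have hxST : x ∉ S ∪ T := by simp [hxS, hx]
    have hST' := (Finset.disjoint_insert_right.1 hST).2
    rw [Finset.union_insert, PP_insert hxST, PP_insert hx, mul_add, mul_left_comm,
      mul_left_comm _ (1 - p), ← ih hST', ← ih hST']
    congr 2 <;> refine PP_congr fun A hA => ?_
    · rw [Finset.insert_inter_of_notMem hxS, ← Finset.insert_inter_distrib]
    · rw [Finset.inter_insert_of_notMem fun h => hxST (hA h)]

lemma PP_eq_of_inter (hS : S ⊆ D) (hE : ∀ A, E (A ∩ S) ↔ E A) : PP D p E = PP S p E :=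
  calc PP D p E = PP (S ∪ D \ S) p (fun A => E (A ∩ S) ∧ True) := by
        rw [Finset.union_sdiff_of_subset hS]; exact PP_congr fun A _ => by simp [hE]
    _ = PP S p E * PP (D \ S) p (fun _ => True) :=
        PP_union_mul Finset.disjoint_sdiff E fun _ => True
    _ = PP S p E := by rw [PP_true, mul_one]

lemma PP_and_of_disjoint (hS : S ⊆ D) (hT : T ⊆ D) (hST : Disjoint S T)
    (hE : ∀ A, E (A ∩ S) ↔ E A) (hF : ∀ A, F (A ∩ T) ↔ F A) :
    PP D p (fun A => E A ∧ F A) = PP D p E * PP D p F := by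
  rw [PP_eq_of_inter (Finset.union_subset hS hT), PP_eq_of_inter hS hE, PP_eq_of_inter hT hF,
    ← PP_union_mul hST]
  · exact PP_congr fun A _ => by rw [hE, hF]
  · intro A
    rw [← hE, ← hF (A ∩ (S ∪ T)), ← hE A, ← hF A, Finset.inter_assoc, Finset.inter_assoc,
      Finset.union_inter_cancel_left, Finset.union_inter_cancel_right]

lemma PP_superset (hS : S ⊆ D) : PP D p (fun A => S ⊆ A) = p ^ S.card := by
  rw [PP_eq_of_inter hS fun A => by simp [Finset.subset_inter_iff], PP,
    Finset.sum_eq_single_of_mem S (Finset.mem_powerset_self S)]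
  · simp
  · intro A hA hne
    simp [(Finset.mem_powerset.1 hA).ssubset_of_ne hne |>.not_subset]

lemma PP_forall_not_superset {ι : Type*} (I : Finset ι) (B : ι → Finset α)
    (hB : ∀ i ∈ I, B i ⊆ D) (hdisj : (I : Set ι).PairwiseDisjoint B) :
    PP D p (fun A => ∀ i ∈ I, ¬ B i ⊆ A) = ∏ i ∈ I, (1 - p ^ (B i).card) := by
  classical
  induction I using Finset.induction with
  | empty => simp [PP_true]
  | insert j I hj ih =>
    have hBj := hB j (Finset.mem_insert_self j I)
    have hBI : I.biUnion B ⊆ D :=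
      Finset.biUnion_subset.2 fun i hi => hB i (Finset.mem_insert_of_mem hi)
    have hdisj' : Disjoint (B j) (I.biUnion B) :=
      (Finset.disjoint_biUnion_right _ _ _).2 fun i hi =>
        hdisj (Finset.mem_insert_self j I) (Finset.mem_insert_of_mem hi) fun h => hj (h ▸ hi)
    rw [Finset.prod_insert hj, ← ih (fun i hi => hB i (Finset.mem_insert_of_mem hi))
      (hdisj.subset (by simp)), ← PP_superset hBj, ← PP_not, ← PP_and_of_disjoint hBj hBI hdisj']
    · exact PP_congr fun A _ => by simp
    · intro A; simp [Finset.subset_inter_iff]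
    · intro A
      refine forall₂_congr fun i hi => ?_
      simp [Finset.subset_inter_iff, Finset.subset_biUnion_of_mem B hi]

lemma PP_le_PPc (hp₀ : 0 < p) (hp₁ : p ≤ 1) {R : Finset α} (hR : R ⊆ D)
    {G : Finset α → Prop}
    (hG : ∀ A, G (A ∩ (D \ R)) ↔ G A) (hF : ∀ A, F (A ∩ R) ↔ F A) (hFD : F D)
    (hGFE : ∀ A, G A → F A → E A) : PP D p G ≤ PPc D p E F := by
  rw [PPc, le_div_iff₀ (PP_pos hp₀ hp₁ hFD),
    ← PP_and_of_disjoint Finset.sdiff_subset hR Finset.sdiff_disjoint hG hF]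
  exact PP_mono hp₀.le hp₁ fun A _ h => ⟨hGFE A h.1 h.2, h.2⟩

end Bernoulli

section Blocks

variable {τ ι α : Type*} [DecidableEq α] {J : Finset τ} {I : τ → Finset ι}
  {B : τ → ι → Finset α} {A S : Finset α}

lemma containsBlockOfEach_inter_iff (hB : ∀ t ∈ J, ∀ i ∈ I t, B t i ⊆ S) :
    ContainsBlockOfEach J I B (A ∩ S) ↔ ContainsBlockOfEach J I B A :=
  forall₂_congr fun t ht => exists_congr fun i => and_congr_right fun hi => by
    simp [Finset.subset_inter_iff, hB t ht i hi]

lemma PP_not_containsBlockOfEach_le {D : Finset α} {p : ℝ} (hp₀ : 0 ≤ p) (hp₁ : p ≤ 1)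
    {k n M : ℕ} (hJ : J.card ≤ M) (hB : ∀ t ∈ J, ∀ i ∈ I t, B t i ⊆ D)
    (hdisj : ∀ t ∈ J, (I t : Set ι).PairwiseDisjoint (B t))
    (hk : ∀ t ∈ J, ∀ i ∈ I t, (B t i).card = k) (hn : ∀ t ∈ J, (I t).card = n) :
    PP D p (fun A => ¬ ContainsBlockOfEach J I B A) ≤ M * (1 - p ^ k) ^ n := by
  calc PP D p (fun A => ¬ ContainsBlockOfEach J I B A)
      = PP D p (fun A => ∃ t ∈ J, ∀ i ∈ I t, ¬ B t i ⊆ A) :=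
        PP_congr fun A _ => by simp [ContainsBlockOfEach]
    _ ≤ ∑ t ∈ J, PP D p (fun A => ∀ i ∈ I t, ¬ B t i ⊆ A) := PP_exists_le hp₀ hp₁ J _
    _ = J.card * (1 - p ^ k) ^ n := by
        rw [← nsmul_eq_mul, ← Finset.sum_const]
        refine Finset.sum_congr rfl fun t ht => ?_
        rw [PP_forall_not_superset _ _ (hB t ht) (hdisj t ht),
          Finset.prod_congr rfl fun i hi => by rw [hk t ht i hi], Finset.prod_const, hn t ht]
    _ ≤ M * (1 - p ^ k) ^ n := by
        have : 0 ≤ 1 - p ^ k := sub_nonneg.2 (pow_le_one₀ hp₀ hp₁)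
        gcongr

end Blocks

noncomputable def failureBound (a b c h Z L : ℕ) (p : ℝ) : ℝ :=
  Z * (1 - p) ^ (h * h) + L * (1 - p ^ (b * c)) ^ (h / b * (Z / c)) +
    L * (1 - p ^ (a * c)) ^ (L / a * (Z / c)) + L * (1 - p) ^ (L * L)

section GrowthEvents

variable {a b c h Z L : ℕ}

lemma growthEvent_blocks_subset_sdiff (hcZ : c ≤ Z) (hhL : h ≤ L) (hZL : Z ≤ L) :
    (∀ z ∈ Finset.Icc ((c : ℤ) + 1) Z, ∀ v ∈ box (1, 1, z) h h 1,
      {v} ⊆ rectF L L L \ rectF h h c) ∧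
    (∀ x ∈ Finset.Icc ((h : ℤ) + 1) L, ∀ ij ∈ Finset.range (h / b) ×ˢ Finset.range (Z / c),
      box (x, ij.1 * b + 1, ij.2 * c + 1) 1 b c ⊆ rectF L L L \ rectF h h c) ∧
    (∀ y ∈ Finset.Icc ((h : ℤ) + 1) L, ∀ ij ∈ Finset.range (L / a) ×ˢ Finset.range (Z / c),
      box (ij.1 * a + 1, y, ij.2 * c + 1) a 1 c ⊆ rectF L L L \ rectF h h c) ∧
    (∀ z ∈ Finset.Icc ((Z : ℤ) + 1) L, ∀ v ∈ box (1, 1, z) L L 1,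
      {v} ⊆ rectF L L L \ rectF h h c) := by
  simp only [Finset.singleton_subset_iff]
  simp only [rectF_eq_box, Finset.subset_iff, Finset.mem_sdiff, mem_box, Finset.mem_Icc,
    Finset.mem_product, Finset.mem_range]
  refine ⟨?_, ?_, ?_, ?_⟩
  · intros; omega
  · rintro x hx ⟨i, j⟩ ⟨hi, hj⟩ v hv
    have := tile_bounds hi
    have := tile_bounds hj
    omega
  · rintro y hy ⟨i, j⟩ ⟨hi, hj⟩ v hv
    have := tile_bounds hi
    have := tile_bounds hj
    omega
  · intros; omega

lemma growthEvent_inter_iff (hcZ : c ≤ Z) (hhL : h ≤ L) (hZL : Z ≤ L) {A : Finset V3} :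
    GrowthEvent a b c h Z L (A ∩ (rectF L L L \ rectF h h c)) ↔ GrowthEvent a b c h Z L A := by
  obtain ⟨h₁, h₂, h₃, h₄⟩ := growthEvent_blocks_subset_sdiff (a := a) (b := b) hcZ hhL hZL
  simp only [GrowthEvent, containsBlockOfEach_inter_iff h₁, containsBlockOfEach_inter_iff h₂,
    containsBlockOfEach_inter_iff h₃, containsBlockOfEach_inter_iff h₄]

lemma PP_not_growthEvent_le {p : ℝ} (hp₀ : 0 ≤ p) (hp₁ : p ≤ 1) (hcZ : c ≤ Z) (hhL : h ≤ L)
    (hZL : Z ≤ L) :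
    PP (rectF L L L) p (fun A => ¬ GrowthEvent a b c h Z L A) ≤ failureBound a b c h Z L p := by
  obtain ⟨h₁, h₂, h₃, h₄⟩ := growthEvent_blocks_subset_sdiff (a := a) (b := b) hcZ hhL hZL
  have hD {τ ι : Type} {J : Finset τ} {I : τ → Finset ι} {B : τ → ι → Finset V3}
      (hB : ∀ t ∈ J, ∀ i ∈ I t, B t i ⊆ rectF L L L \ rectF h h c) :
      ∀ t ∈ J, ∀ i ∈ I t, B t i ⊆ rectF L L L :=
    fun t ht i hi => (hB t ht i hi).trans Finset.sdiff_subset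
  have hsingle (s : Finset V3) : (s : Set V3).PairwiseDisjoint fun v => ({v} : Finset V3) :=
    fun u _ v _ huv => Finset.disjoint_singleton.2 huv
  have hIcc (m n : ℕ) : (Finset.Icc ((m : ℤ) + 1) n).card ≤ n := by rw [Int.card_Icc]; omega
  have hrange (m n : ℕ) : (Finset.range m ×ˢ Finset.range n).card = m * n := by simp
  unfold GrowthEvent failureBound
  rw [add_assoc, add_assoc]
  refine (PP_not_and_le hp₀ hp₁).trans (add_le_add ?_ <| (PP_not_and_le hp₀ hp₁).trans <|
    add_le_add ?_ <| (PP_not_and_le hp₀ hp₁).trans <| add_le_add ?_ ?_)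
  · refine (PP_not_containsBlockOfEach_le hp₀ hp₁ (hIcc c Z) (hD h₁) (fun _ _ => hsingle _)
      (fun _ _ _ _ => Finset.card_singleton _) (fun _ _ => card_box)).trans_eq ?_
    rw [pow_one, mul_one]
  · exact PP_not_containsBlockOfEach_le hp₀ hp₁ (hIcc h L) (hD h₂)
      (fun x _ => pairwiseDisjoint_xTiles x _) (fun _ _ _ _ => by rw [card_box, one_mul])
      (fun _ _ => hrange _ _)
  · exact PP_not_containsBlockOfEach_le hp₀ hp₁ (hIcc h L) (hD h₃)
      (fun y _ => pairwiseDisjoint_yTiles y _) (fun _ _ _ _ => by rw [card_box, mul_one])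
      (fun _ _ => hrange _ _)
  · refine (PP_not_containsBlockOfEach_le hp₀ hp₁ (hIcc Z L) (hD h₄) (fun _ _ => hsingle _)
      (fun _ _ _ _ => Finset.card_singleton _) (fun _ _ => card_box)).trans_eq ?_
    rw [pow_one, mul_one]

end GrowthEvents

/-! ### Estimates at the scales `h`, `Z`, `L` -/

section Estimates

open Real

lemma log_le_two_mul_sqrt {x : ℝ} (hx : 0 < x) : log x ≤ 2 * √x := by
  have := log_le_sub_one_of_pos (sqrt_pos.2 hx)
  rw [log_sqrt hx.le] at this
  linarith

lemma log_add_log_le_four_mul_sqrt {x y : ℝ} (hy : 0 < y) (hyx : y ≤ x) :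
    log x + log y ≤ 4 * √x := by
  linarith [log_le_log hy hyx, log_le_two_mul_sqrt (hy.trans_le hyx)]

lemma div_two_mul_le_natCast_div {n d : ℕ} (hd : 0 < d) (hdn : d ≤ n) :
    (n : ℝ) / (2 * d) ≤ (n / d : ℕ) := by
  have h₁ : n < n / d * d + d := Nat.lt_div_mul_add hd
  have h₂ : 1 ≤ n / d := (Nat.one_le_div_iff hd).2 hdn
  rw [div_le_iff₀ (by positivity)]
  have : (n : ℝ) ≤ (n / d : ℕ) * d + d := by exact_mod_cast h₁.le
  have : (1 : ℝ) ≤ (n / d : ℕ) := by exact_mod_cast h₂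
  nlinarith

lemma one_sub_pow_le_exp_neg {x : ℝ} (hx : x ≤ 1) (n : ℕ) :
    (1 - x) ^ n ≤ exp (-(n * x)) := by
  rw [neg_mul_eq_mul_neg, exp_nat_mul]
  exact pow_le_pow_left₀ (by linarith) (one_sub_le_exp_neg x) n

lemma mul_one_sub_pow_le_two_mul {p x μ M : ℝ} {n : ℕ} (hp : 0 < p) (hx : x ≤ 1)
    (hM : M ≤ 2 * exp μ) (hn : μ + log p⁻¹ ≤ n * x) :
    M * (1 - x) ^ n ≤ 2 * p :=
  calc M * (1 - x) ^ n ≤ 2 * exp μ * exp (-(n * x)) :=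
        mul_le_mul hM (one_sub_pow_le_exp_neg hx n) (pow_nonneg (by linarith) _) (by positivity)
    _ = 2 * exp (μ - n * x) := by rw [mul_assoc, ← exp_add, sub_eq_add_neg]
    _ ≤ 2 * exp (log p) := by gcongr; rw [log_inv] at hn; linarith
    _ = 2 * p := by rw [exp_log hp]

section Failures

variable {p : ℝ}

lemma layers_failure_le {c h j Z : ℕ} (hp₀ : 0 < p) (hp₁ : p ≤ 1) (hjc : j + 1 ≤ c * c)
    (hh : c * √(p⁻¹ * log p⁻¹) ≤ h) (hZ : (Z : ℝ) ≤ 2 * p⁻¹ ^ j) :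
    Z * (1 - p) ^ (h * h) ≤ 2 * p := by
  have hl : 0 ≤ log p⁻¹ := log_nonneg ((one_le_inv₀ hp₀).2 hp₁)
  refine mul_one_sub_pow_le_two_mul (μ := j * log p⁻¹) hp₀ hp₁ ?_ ?_
  · rwa [← log_pow, exp_log (by positivity)]
  · have hjc' : ((j : ℝ) + 1) ≤ c * c := by exact_mod_cast hjc
    have hsq : ((c : ℝ) * √(p⁻¹ * log p⁻¹)) ^ 2 = c * c * log p⁻¹ * p⁻¹ := by
      rw [mul_pow, sq_sqrt (by positivity)]; ring
    have hh2 : ((c : ℝ) * √(p⁻¹ * log p⁻¹)) ^ 2 ≤ (h : ℝ) ^ 2 :=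
      pow_le_pow_left₀ (by positivity) hh 2
    calc j * log p⁻¹ + log p⁻¹ ≤ c * c * log p⁻¹ := by nlinarith
      _ = ((c : ℝ) * √(p⁻¹ * log p⁻¹)) ^ 2 * p := by rw [hsq]; field_simp
      _ ≤ (h : ℝ) ^ 2 * p := by gcongr
      _ = ((h * h : ℕ) : ℝ) * p := by push_cast; ring

lemma xTiles_failure_le {Γ : ℝ} {b c h Z L : ℕ} (hp₀ : 0 < p) (hp₁ : p ≤ 1) (hΓ : 0 ≤ Γ)
    (hl : 1 ≤ log p⁻¹) (hq : 4 * b * (Γ + 1) ≤ p⁻¹) (hb : 0 < b) (hbh : b ≤ h) (hc : 0 < c)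
    (hcZ : c ≤ Z) (hh : c * √(p⁻¹ * log p⁻¹) ≤ h) (hZ : p⁻¹ ^ (b * c + 2) ≤ Z)
    (hL : (L : ℝ) ≤ 2 * exp (Γ * (√(p⁻¹ * log p⁻¹) * log p⁻¹))) :
    L * (1 - p ^ (b * c)) ^ (h / b * (Z / c)) ≤ 2 * p := by
  set q := p⁻¹
  set s := √(q * log q)
  have hq₁ : 1 ≤ q := (one_le_inv₀ hp₀).2 hp₁
  have hlq : log q ≤ q := (log_le_sub_one_of_pos (by positivity)).trans (by linarith)
  have hs : 1 ≤ s := one_le_sqrt.2 (by nlinarith)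
  refine mul_one_sub_pow_le_two_mul hp₀ (pow_le_one₀ hp₀.le hp₁) hL ?_
  have hZq : (Z : ℝ) * p ^ (b * c) ≥ q ^ 2 := by
    have : q ^ (b * c + 2) * p ^ (b * c) = q ^ 2 := by
      rw [pow_add, mul_right_comm, ← mul_pow, inv_mul_cancel₀ hp₀.ne', one_pow, one_mul]
    nlinarith [pow_pos hp₀ (b * c)]
  have hhb := div_two_mul_le_natCast_div hb hbh
  have hZc := div_two_mul_le_natCast_div hc hcZ
  calc Γ * (s * log q) + log q ≤ (Γ + 1) * s * q := by
        have : Γ * (s * log q) ≤ Γ * (s * q) := by gcongr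
        nlinarith
    _ ≤ (c * s / (2 * b)) * (q ^ 2 / (2 * c)) := by
        rw [div_mul_div_comm, le_div_iff₀ (by positivity)]
        have : (c : ℝ) * s * q * (4 * b * (Γ + 1)) ≤ c * s * q * q := by gcongr
        nlinarith
    _ ≤ (h / (2 * b)) * (Z * p ^ (b * c) / (2 * c)) := by gcongr
    _ ≤ ((h / b : ℕ) : ℝ) * ((Z / c : ℕ) * p ^ (b * c)) := by
        rw [mul_div_right_comm]
        gcongr
    _ = ((h / b * (Z / c) : ℕ) : ℝ) * p ^ (b * c) := by push_cast; ring

lemma yTiles_failure_le {a b c Z L : ℕ} (hp₀ : 0 < p) (hp₁ : p ≤ 1) (hac : a ≤ b)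
    (ha : 0 < a) (haL : a ≤ L) (hc : 0 < c) (hcZ : c ≤ Z) (hZ : p⁻¹ ^ (b * c + 2) ≤ Z)
    (hLq : p⁻¹ ≤ L) (hL : 16 * a * c ≤ √L) :
    L * (1 - p ^ (a * c)) ^ (L / a * (Z / c)) ≤ 2 * p := by
  have hL₀ : (0 : ℝ) < L := by exact_mod_cast ha.trans_le haL
  refine mul_one_sub_pow_le_two_mul hp₀ (pow_le_one₀ hp₀.le hp₁)
    (by rw [exp_log hL₀]; linarith) ?_
  have hZp : 1 ≤ (Z : ℝ) * p ^ (a * c) := by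
    have : 1 ≤ p⁻¹ ^ (b * c + 2 - a * c) := one_le_pow₀ ((one_le_inv₀ hp₀).2 hp₁)
    have hexp : b * c + 2 = (b * c + 2 - a * c) + a * c := by
      have := Nat.mul_le_mul_right c hac; omega
    calc (1 : ℝ) ≤ p⁻¹ ^ (b * c + 2 - a * c) := this
      _ = p⁻¹ ^ (b * c + 2) * p ^ (a * c) := by
          rw [hexp, pow_add, mul_assoc, ← mul_pow, inv_mul_cancel₀ hp₀.ne', one_pow, mul_one,
            Nat.add_sub_cancel]
      _ ≤ Z * p ^ (a * c) := by gcongr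
  have hLa := div_two_mul_le_natCast_div ha haL
  have hZc := div_two_mul_le_natCast_div hc hcZ
  have hsq : √(L : ℝ) * √L = L := mul_self_sqrt hL₀.le
  calc log L + log p⁻¹ ≤ 4 * √L := log_add_log_le_four_mul_sqrt (by positivity) hLq
    _ ≤ L / (2 * a) * (1 / (2 * c)) := by
        rw [div_mul_div_comm, le_div_iff₀ (by positivity)]
        nlinarith [mul_le_mul_of_nonneg_right hL (sqrt_nonneg (L : ℝ))]
    _ ≤ L / (2 * a) * (Z * p ^ (a * c) / (2 * c)) := by gcongr
    _ ≤ ((L / a : ℕ) : ℝ) * ((Z / c : ℕ) * p ^ (a * c)) := by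
        rw [mul_div_right_comm]
        gcongr
    _ = ((L / a * (Z / c) : ℕ) : ℝ) * p ^ (a * c) := by push_cast; ring

lemma top_failure_le {L : ℕ} (hp₀ : 0 < p) (hp₁ : p ≤ 1) (hLq : p⁻¹ ≤ L) (hL : 4 ≤ √L) :
    L * (1 - p) ^ (L * L) ≤ 2 * p := by
  have hL₀ : (0 : ℝ) < L := (inv_pos.2 hp₀).trans_le hLq
  refine mul_one_sub_pow_le_two_mul hp₀ hp₁ (by rw [exp_log hL₀]; linarith) ?_
  have hsq : √(L : ℝ) * √L = L := mul_self_sqrt hL₀.le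
  have hpL : 1 ≤ p * L := by rwa [← inv_mul_le_iff₀ hp₀, mul_one]
  calc log L + log p⁻¹ ≤ 4 * √L := log_add_log_le_four_mul_sqrt (by positivity) hLq
    _ ≤ L := by nlinarith
    _ ≤ ((L * L : ℕ) : ℝ) * p := by push_cast; nlinarith

end Failures

end Estimates

noncomputable def seedSide (c : ℕ) (p : ℝ) : ℕ :=
  ⌈(c : ℝ) * p ^ (-(1 : ℝ) / 2) * Real.log (1 / p) ^ ((1 : ℝ) / 2)⌉₊

noncomputable def boxSide (Γ p : ℝ) : ℕ :=
  ⌈Real.exp (Γ * p ^ (-(1 : ℝ) / 2) * Real.log (1 / p) ^ ((3 : ℝ) / 2))⌉₊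

section Scales

open Real

variable {a b c : ℕ} {Γ p : ℝ}

lemma rpow_neg_half_mul_log_rpow_half (hp₀ : 0 < p) :
    p ^ (-(1 : ℝ) / 2) * log (1 / p) ^ ((1 : ℝ) / 2) = √(p⁻¹ * log p⁻¹) := by
  rw [sqrt_mul (inv_nonneg.2 hp₀.le), sqrt_eq_rpow, sqrt_eq_rpow, one_div, inv_rpow hp₀.le,
    ← rpow_neg hp₀.le, neg_div]

lemma rpow_neg_half_mul_log_rpow_three_halves (hp₀ : 0 < p) (hp₁ : p ≤ 1) :
    p ^ (-(1 : ℝ) / 2) * log (1 / p) ^ ((3 : ℝ) / 2) = √(p⁻¹ * log p⁻¹) * log p⁻¹ := by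
  have hl : 0 ≤ log p⁻¹ := log_nonneg ((one_le_inv₀ hp₀).2 hp₁)
  rw [sqrt_mul (inv_nonneg.2 hp₀.le), sqrt_eq_rpow, sqrt_eq_rpow, one_div, inv_rpow hp₀.le,
    ← rpow_neg hp₀.le, neg_div, mul_assoc, show (3 : ℝ) / 2 = 1 / 2 + 1 by norm_num,
    rpow_add' hl (by norm_num), rpow_one]

lemma seedSide_bounds (hp₀ : 0 < p) :
    c * √(p⁻¹ * log p⁻¹) ≤ seedSide c p ∧ (seedSide c p : ℝ) < c * √(p⁻¹ * log p⁻¹) + 1 := by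
  rw [seedSide, mul_assoc, rpow_neg_half_mul_log_rpow_half hp₀]
  exact ⟨Nat.le_ceil _, Nat.ceil_lt_add_one (by positivity)⟩

lemma boxSide_bounds (hΓ : 0 ≤ Γ) (hp₀ : 0 < p) (hp₁ : p ≤ 1) :
    exp (Γ * (√(p⁻¹ * log p⁻¹) * log p⁻¹)) ≤ boxSide Γ p ∧
      (boxSide Γ p : ℝ) ≤ 2 * exp (Γ * (√(p⁻¹ * log p⁻¹) * log p⁻¹)) := by
  rw [boxSide, mul_assoc, rpow_neg_half_mul_log_rpow_three_halves hp₀ hp₁]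
  refine ⟨Nat.le_ceil _, (Nat.ceil_lt_add_one (by positivity)).le.trans ?_⟩
  have : 0 ≤ log p⁻¹ := log_nonneg ((one_le_inv₀ hp₀).2 hp₁)
  linarith [one_le_exp (x := Γ * (√(p⁻¹ * log p⁻¹) * log p⁻¹)) (by positivity)]

lemma one_le_log_of_three_le {q : ℝ} (hq : 3 ≤ q) : 1 ≤ log q :=
  (le_log_iff_exp_le (by positivity)).2 (by linarith [exp_one_lt_d9])

lemma sqrt_le_sqrt_mul_log {q : ℝ} (hq : 3 ≤ q) : √q ≤ √(q * log q) :=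
  sqrt_le_sqrt (le_mul_of_one_le_right (by positivity) (one_le_log_of_three_le hq))

lemma sqrt_mul_log_le {q : ℝ} (hq : 1 ≤ q) : √(q * log q) ≤ q := by
  have := log_le_sub_one_of_pos (by positivity : 0 < q)
  have := log_nonneg hq
  exact sqrt_le_iff.2 ⟨by positivity, by nlinarith⟩

lemma pow_le_boxSide (hΓ : 0 < Γ) (hp₀ : 0 < p) (hq : 3 ≤ p⁻¹) {k : ℕ}
    (hk : ((k : ℝ) / Γ) ^ 2 ≤ p⁻¹) : p⁻¹ ^ k ≤ boxSide Γ p := by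
  have hl := one_le_log_of_three_le hq
  refine le_trans ?_ (boxSide_bounds hΓ.le hp₀ ((one_le_inv₀ hp₀).1 (by linarith))).1
  rw [← exp_log (by positivity : 0 < p⁻¹ ^ k), log_pow]
  refine exp_le_exp.2 ?_
  have : (k : ℝ) / Γ ≤ √(p⁻¹ * log p⁻¹) :=
    ((le_sqrt (by positivity) (by positivity)).2 hk).trans (sqrt_le_sqrt_mul_log hq)
  rw [div_le_iff₀ hΓ] at this
  nlinarith

lemma le_seedSide (hp₀ : 0 < p) (hq : 3 ≤ p⁻¹) (hc : 1 ≤ c) (hb : (b : ℝ) ^ 2 ≤ p⁻¹) :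
    b ≤ seedSide c p := by
  have h₁ : (b : ℝ) ≤ √p⁻¹ := (le_sqrt (by positivity) (by positivity)).2 hb
  have h₂ := (seedSide_bounds (c := c) hp₀).1
  have h₃ := sqrt_le_sqrt_mul_log hq
  have : (1 : ℝ) ≤ c := by exact_mod_cast hc
  exact_mod_cast (show (b : ℝ) ≤ seedSide c p by nlinarith [sqrt_nonneg p⁻¹])

lemma seedSide_le (hp₀ : 0 < p) (hq : 3 ≤ p⁻¹) (hc : c ≤ p⁻¹) :
    (seedSide c p : ℝ) ≤ p⁻¹ ^ 3 := by
  have h₁ := (seedSide_bounds (c := c) hp₀).2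
  have h₂ : (c : ℝ) * √(p⁻¹ * log p⁻¹) ≤ p⁻¹ * p⁻¹ :=
    mul_le_mul hc (sqrt_mul_log_le (by linarith)) (by positivity) (by positivity)
  nlinarith

lemma scales_of_le_inv (hab : a ≤ b) (hbc : b < c) (hcab : c < a + b) (hΓ : 0 < Γ)
    (hp₀ : 0 < p) (h₁ : 16 * a * c ≤ p⁻¹) (h₂ : (b : ℝ) ^ 2 ≤ p⁻¹)
    (h₃ : 4 * b * (Γ + 1) ≤ p⁻¹) (h₄ : ((b * c + 3 : ℕ) / Γ) ^ 2 ≤ p⁻¹) :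
    ∃ Z : ℕ, b ≤ seedSide c p ∧ c ≤ Z ∧ seedSide c p ≤ boxSide Γ p ∧ Z ≤ boxSide Γ p ∧
      failureBound a b c (seedSide c p) Z (boxSide Γ p) p ≤ 8 * p := by
  have ha : (2 : ℝ) ≤ a := by exact_mod_cast (by omega : 2 ≤ a)
  have hc : (3 : ℝ) ≤ c := by exact_mod_cast (by omega : 3 ≤ c)
  set q := p⁻¹
  have hq : 32 ≤ q := le_trans (by nlinarith) h₁
  have hq₁ : 1 ≤ q := by linarith
  have hp₁ : p ≤ 1 := (one_le_inv₀ hp₀).1 hq₁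
  have hcq : (c : ℝ) ≤ q := le_trans (by nlinarith) h₁
  have hh := (seedSide_bounds (c := c) hp₀).1
  have hL := (boxSide_bounds hΓ.le hp₀ hp₁).2
  set h := seedSide c p
  set L := boxSide Γ p
  set Z := ⌈q ^ (b * c + 2)⌉₊
  have hLq : q ^ (b * c + 3) ≤ L := pow_le_boxSide hΓ hp₀ (by linarith) h₄
  have hq₂ : q ^ 2 ≤ L := (pow_le_pow_right₀ hq₁ (by omega)).trans hLq
  have hqL : q ≤ L := (le_self_pow₀ hq₁ two_ne_zero).trans hq₂
  have hZ : q ^ (b * c + 2) ≤ Z := Nat.le_ceil _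
  have hZ' : (Z : ℝ) ≤ 2 * q ^ (b * c + 2) := (Nat.ceil_lt_add_one (by positivity)).le.trans
    (by linarith [one_le_pow₀ (n := b * c + 2) hq₁])
  have hbh : b ≤ h := le_seedSide hp₀ (by linarith) (by omega) h₂
  have hcZ : c ≤ Z := Nat.cast_le.1 <| hcq.trans <| (le_self_pow₀ hq₁ (by omega)).trans hZ
  have hhL : h ≤ L := Nat.cast_le.1 <| (seedSide_le hp₀ (by linarith) hcq).trans <|
    (pow_le_pow_right₀ hq₁ (by omega)).trans hLq
  have hZL : Z ≤ L := (Nat.cast_le (α := ℝ)).1 <| by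
    have := pow_nonneg (by linarith : (0 : ℝ) ≤ q) (b * c + 2)
    rw [pow_succ] at hLq
    nlinarith
  have haL : a ≤ L := Nat.cast_le.1 <| le_trans (by nlinarith) (h₁.trans hqL)
  have hjc : b * c + 2 + 1 ≤ c * c := by
    have := Nat.mul_le_mul_right c hbc
    rw [Nat.succ_mul] at this
    omega
  refine ⟨Z, hbh, hcZ, hhL, hZL, ?_⟩
  have F₁ := layers_failure_le hp₀ hp₁ hjc hh hZ'
  have F₂ := xTiles_failure_le hp₀ hp₁ hΓ.le (one_le_log_of_three_le (by linarith)) h₃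
    (by omega) hbh (by omega) hcZ hh hZ hL
  have hqL' : q ≤ √L := (le_sqrt (by positivity) (by positivity)).2 hq₂
  have F₃ := yTiles_failure_le hp₀ hp₁ hab (by omega) haL (by omega) hcZ hZ hqL (h₁.trans hqL')
  have F₄ := top_failure_le hp₀ hp₁ hqL (by linarith)
  unfold failureBound
  linarith

end Scales

open Filter Topology in
lemma eventually_scales {a b c : ℕ} {Γ : ℝ} (hab : a ≤ b) (hbc : b < c) (hcab : c < a + b)
    (hΓ : 0 < Γ) :
    ∀ᶠ p in 𝓝[>] 0, ∃ Z : ℕ, b ≤ seedSide c p ∧ c ≤ Z ∧ seedSide c p ≤ boxSide Γ p ∧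
      Z ≤ boxSide Γ p ∧ failureBound a b c (seedSide c p) Z (boxSide Γ p) p ≤ 8 * p := by
  have hinv := tendsto_inv_nhdsGT_zero (𝕜 := ℝ)
  filter_upwards [self_mem_nhdsWithin, hinv.eventually_ge_atTop (16 * a * c),
    hinv.eventually_ge_atTop ((b : ℝ) ^ 2), hinv.eventually_ge_atTop (4 * b * (Γ + 1)),
    hinv.eventually_ge_atTop ((((b * c + 3 : ℕ) : ℝ) / Γ) ^ 2)] with p hp h₁ h₂ h₃ h₄
  exact scales_of_le_inv hab hbc hcab hΓ hp h₁ h₂ h₃ h₄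

theorem statement5_general (a b c : ℕ) (hab : a ≤ b) (hbc : b < c) (hcab : c < a + b) :
    ∃ Γ₀ : ℝ, 0 < Γ₀ ∧ ∀ Γ : ℝ, Γ₀ ≤ Γ → ∀ ε : ℝ, 0 < ε → ∃ p₀ : ℝ, 0 < p₀ ∧
      ∀ p : ℝ, 0 < p → p < p₀ → ∀ h L : ℕ,
        h = ⌈(c : ℝ) * p ^ (-(1 : ℝ) / 2) * Real.log (1 / p) ^ ((1 : ℝ) / 2)⌉₊ →
        L = ⌈Real.exp (Γ * p ^ (-(1 : ℝ) / 2) * Real.log (1 / p) ^ ((3 : ℝ) / 2))⌉₊ →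
        1 - ε < PPc (rectF L L L) p
          (IFill a b c (c + 1) (rect L L L))
          (IFill a b c (c + 1) (rect h h c)) := by
  refine ⟨1, one_pos, fun Γ hΓ ε hε => ?_⟩
  obtain ⟨p₀, hp₀, hsmall⟩ := mem_nhdsGT_iff_exists_Ioo_subset.1 <|
    (eventually_scales (Γ := Γ) hab hbc hcab (by linarith)).and <| nhdsWithin_le_nhds <|
      (eventually_lt_nhds (by positivity : (0 : ℝ) < ε / 8)).and (eventually_lt_nhds one_pos)
  refine ⟨p₀, hp₀, fun p hp hpp₀ h L hh hL => ?_⟩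
  obtain ⟨⟨Z, hbh, hcZ, hhL, hZL, hfail⟩, hpε, hp₁⟩ := hsmall ⟨hp, hpp₀⟩
  rw [← seedSide] at hh
  rw [← boxSide] at hL
  rw [← hh] at hbh hhL hfail
  rw [← hL] at hhL hZL hfail
  have hRD : rectF h h c ⊆ rectF L L L := by
    rw [rectF_eq_box, rectF_eq_box]
    exact box_subset_box le_rfl (by omega) le_rfl (by omega) le_rfl (by omega)
  have hgrowth := PP_not_growthEvent_le (a := a) (b := b) hp.le hp₁.le hcZ hhL hZL
  rw [PP_not] at hgrowth
  calc 1 - ε < 1 - 8 * p := by linarith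
    _ ≤ PP (rectF L L L) p (GrowthEvent a b c h Z L) := by linarith
    _ ≤ _ := PP_le_PPc hp hp₁.le hRD (fun A => growthEvent_inter_iff hcZ hhL hZL)
        (fun A => IFill_inter_iff) (IFill_of_subset (Finset.coe_subset.2 hRD))
        (fun A hG hF => IFill_of_growthEvent hab hbc hcab hbh hcZ hhL hZL hG hF)

/-- **Lemma 2.4.** For `c ∈ {b+1, …, a+b−1}` and `N_{c+1}^{a,b,c}`-bootstrap percolation:
for a sufficiently large constant `Γ > 0`, with `h = c p^{-1/2} (log(1/p))^{1/2}`,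
`R₁ = [h]²×[c]` and `L = exp(Γ p^{-1/2} (log(1/p))^{3/2})` (rounded to integers), the
conditional probability `ℙ_p(I•([L]³) | I•(R₁))` tends to `1` as `p → 0`. -/
theorem statement5 (a b c : ℕ) (ha : 1 ≤ a) (hab : a ≤ b) (hbc : b < c) (hcab : c < a + b) :
    ∃ Γ₀ : ℝ, 0 < Γ₀ ∧ ∀ Γ : ℝ, Γ₀ ≤ Γ → ∀ ε : ℝ, 0 < ε → ∃ p₀ : ℝ, 0 < p₀ ∧
      ∀ p : ℝ, 0 < p → p < p₀ → ∀ h L : ℕ,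
        h = ⌈(c : ℝ) * p ^ (-(1 : ℝ) / 2) * Real.log (1 / p) ^ ((1 : ℝ) / 2)⌉₊ →
        L = ⌈Real.exp (Γ * p ^ (-(1 : ℝ) / 2) * Real.log (1 / p) ^ ((3 : ℝ) / 2))⌉₊ →
        1 - ε < PPc (rectF L L L) p
          (IFill a b c (c + 1) (rect L L L))
          (IFill a b c (c + 1) (rect h h c)) :=
  statement5_general a b c hab hbc hcab
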